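/- Let τ, γ, λ > 0, U ∈ ℝ^{p×n}, V ∈ ℝ^{p×m}, and define Ψ(W) := (τ/2)‖U − VW‖² + (γ/2)‖W‖² for W ∈ ℝ^{m×n}. Fix β > 0. Then W* ∈ ℝ^{m×n} satisfies the inclusion W* ∈ Prox_{βλ‖·‖_{0,2}}(W* − β∇Ψ(W*)) if and only if for every row index s ∈ [m]: if W*_{s:} ≠ 0 then (∇Ψ(W*))_{s:} = 0 and ‖W*_{s:}‖ ≥ √(2βλ), and if W*_{s:} = 0 then ‖(∇Ψ(W*))_{s:}‖ ≤ √(2λ/β). -/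

import Mathlib

/-!
Both `‖·‖_{0,2}` and `‖·‖²` are sums over rows, so `W*` solves the proximal problem iff each
row `w = W*_{s:}` minimizes `z ↦ λ[z ≠ 0] + ‖z − h‖² / (2β)` with `h = w − βd`, `d = (∇Ψ(W*))_{s:}`.
On `z ≠ 0` the row cost is at least `λ`, with equality at `z = h` when `h ≠ 0`, and `z = 0`
costs `‖h‖² / (2β)`. Since `w` itself costs `λ[w ≠ 0] + β‖d‖² / 2`, comparing with these two
competitors forces `d = 0` and `‖w‖² ≥ 2βλ` when `w ≠ 0`, and `β‖d‖² / 2 ≤ λ` when `w = 0`.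
-/

set_option autoImplicit false

open Matrix

/-- Squared Frobenius norm of a matrix. -/
def frobSq {m n : ℕ} (W : Matrix (Fin m) (Fin n) ℝ) : ℝ :=
  ∑ i, ∑ j, (W i j) ^ 2

/-- Euclidean norm of a (row) vector. -/
noncomputable def rowNorm {n : ℕ} (v : Fin n → ℝ) : ℝ :=
  Real.sqrt (∑ j, (v j) ^ 2)

open Classical in
/-- `‖W‖_{0,2}`: the number of nonzero rows of `W`, as a real number. -/
noncomputable def norm02 {m n : ℕ} (W : Matrix (Fin m) (Fin n) ℝ) : ℝ :=
  ((Finset.univ.filter fun s : Fin m => W s ≠ 0).card : ℝ)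

/-- The proximal operator (as a set of global minimizers):
`Prox_β G (H) = argmin_W { G(W) + (1/(2β))‖W − H‖² }`. -/
def ProxSet {m n : ℕ} (β : ℝ) (G : Matrix (Fin m) (Fin n) ℝ → ℝ)
    (H : Matrix (Fin m) (Fin n) ℝ) : Set (Matrix (Fin m) (Fin n) ℝ) :=
  {W | ∀ Z : Matrix (Fin m) (Fin n) ℝ,
    G W + (1 / (2 * β)) * frobSq (W - H) ≤ G Z + (1 / (2 * β)) * frobSq (Z - H)}

/-- The gradient of `Ψ(W) = (τ/2)‖U − VW‖² + (γ/2)‖W‖²`, namely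
`∇Ψ(W) = τ Vᵀ(VW − U) + γ W`. -/
def gradPsi {p m n : ℕ} (τ γ : ℝ) (U : Matrix (Fin p) (Fin n) ℝ)
    (V : Matrix (Fin p) (Fin m) ℝ) (W : Matrix (Fin m) (Fin n) ℝ) :
    Matrix (Fin m) (Fin n) ℝ :=
  τ • (Vᵀ * (V * W - U)) + γ • W

theorem forall_sum_le_sum_iff_forall_le {ι α M : Type*} [Fintype ι] [AddCommMonoid M]
    [PartialOrder M] [IsOrderedCancelAddMonoid M] (f : ι → α → M) (x : ι → α) :
    (∀ y : ι → α, ∑ i, f i (x i) ≤ ∑ i, f i (y i)) ↔ ∀ i a, f i (x i) ≤ f i a := by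
  classical
  refine ⟨fun h i a => ?_, fun h y => Finset.sum_le_sum fun i _ => h i (y i)⟩
  have hupd := h (Function.update x i a)
  simp only [Function.apply_update f x i a] at hupd
  rwa [Finset.sum_update_of_mem (Finset.mem_univ i), ← Finset.add_sum_erase _ _ (Finset.mem_univ i),
    ← Finset.sdiff_singleton_eq_erase, add_le_add_iff_right] at hupd

section HardThresholding

variable {E : Type*} [NormedAddCommGroup E]

open Classical in
noncomputable def l0ProxCost (lam β : ℝ) (h z : E) : ℝ :=
  (if z = 0 then 0 else lam) + 1 / (2 * β) * ‖z - h‖ ^ 2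

variable {lam β : ℝ}

theorem l0ProxCost_zero (h : E) : l0ProxCost lam β h 0 = 1 / (2 * β) * ‖h‖ ^ 2 := by
  simp [l0ProxCost]

theorem l0ProxCost_self_le (hlam : 0 ≤ lam) (h : E) : l0ProxCost lam β h h ≤ lam := by
  unfold l0ProxCost
  split_ifs <;> simp [hlam]

theorem le_l0ProxCost (hβ : 0 ≤ β) (h : E) {z : E} (hz : z ≠ 0) : lam ≤ l0ProxCost lam β h z := by
  unfold l0ProxCost
  rw [if_neg hz]
  have : 0 ≤ 1 / (2 * β) * ‖z - h‖ ^ 2 := by positivity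
  linarith

open Classical in
theorem l0ProxCost_sub_smul [NormedSpace ℝ E] (hβ : 0 < β) (w d : E) :
    l0ProxCost lam β (w - β • d) w = (if w = 0 then 0 else lam) + β / 2 * ‖d‖ ^ 2 := by
  rw [l0ProxCost, sub_sub_cancel, norm_smul, Real.norm_of_nonneg hβ.le]
  field_simp

theorem forall_l0ProxCost_le_iff [NormedSpace ℝ E] (hlam : 0 < lam) (hβ : 0 < β) (w d : E) :
    (∀ z, l0ProxCost lam β (w - β • d) w ≤ l0ProxCost lam β (w - β • d) z) ↔
      (w ≠ 0 → d = 0 ∧ √(2 * β * lam) ≤ ‖w‖) ∧ (w = 0 → ‖d‖ ≤ √(2 * lam / β)) := by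
  have hself := l0ProxCost_self_le (β := β) hlam.le (w - β • d)
  have hw_cost := l0ProxCost_sub_smul (lam := lam) hβ w d
  have hw_bound : √(2 * β * lam) ≤ ‖w‖ ↔ lam ≤ 1 / (2 * β) * ‖w‖ ^ 2 := by
    rw [Real.sqrt_le_left (norm_nonneg w), one_div, inv_mul_eq_div, le_div_iff₀ (by positivity)]
    constructor <;> intro <;> linarith
  have hd_bound : ‖d‖ ≤ √(2 * lam / β) ↔ β / 2 * ‖d‖ ^ 2 ≤ lam := by
    rw [Real.le_sqrt (norm_nonneg d) (by positivity), le_div_iff₀ hβ]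
    constructor <;> intro <;> linarith
  constructor
  · intro hmin
    have hmin_self := (hmin _).trans hself
    refine ⟨fun hw => ?_, fun hw => ?_⟩
    · rw [hw_cost, if_neg hw] at hmin_self
      have hd : d = 0 := by
        by_contra hd
        have : 0 < β / 2 * ‖d‖ ^ 2 := mul_pos (by positivity) (pow_pos (norm_pos_iff.mpr hd) 2)
        linarith
      have hmin_zero := hmin 0
      rw [hw_cost, if_neg hw, hd, l0ProxCost_zero] at hmin_zero
      exact ⟨hd, hw_bound.mpr (by simpa using hmin_zero)⟩
    · rw [hw_cost, if_pos hw, zero_add] at hmin_self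
      exact hd_bound.mpr hmin_self
  · rintro ⟨hnonzero, hzero⟩ z
    by_cases hw : w = 0
    · rcases eq_or_ne z 0 with rfl | hz
      · rw [hw]
      · rw [hw_cost, if_pos hw, zero_add]
        exact (hd_bound.mp (hzero hw)).trans (le_l0ProxCost hβ.le _ hz)
    · obtain ⟨hd, hw_large⟩ := hnonzero hw
      rw [hw_cost, if_neg hw, hd, norm_zero]
      rcases eq_or_ne z 0 with rfl | hz
      · simpa [hd, l0ProxCost_zero] using hw_bound.mp hw_large
      · simpa using le_l0ProxCost hβ.le _ hz

end HardThresholding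

theorem rowNorm_eq_norm {n : ℕ} (v : Fin n → ℝ) :
    rowNorm v = ‖(WithLp.toLp 2 v : EuclideanSpace ℝ (Fin n))‖ := by
  simp [rowNorm, EuclideanSpace.norm_eq]

theorem frobSq_eq_sum_norm_sq {m n : ℕ} (W : Matrix (Fin m) (Fin n) ℝ) :
    frobSq W = ∑ s, ‖(WithLp.toLp 2 (W s) : EuclideanSpace ℝ (Fin n))‖ ^ 2 := by
  simp [frobSq, EuclideanSpace.real_norm_sq_eq]

open Classical in
theorem mul_norm02_eq_sum {m n : ℕ} (lam : ℝ) (W : Matrix (Fin m) (Fin n) ℝ) :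
    lam * norm02 W = ∑ s, if W s = 0 then 0 else lam := by
  simp_rw [norm02, Finset.card_filter, Nat.cast_sum, Finset.mul_sum]
  refine Finset.sum_congr rfl fun s _ => ?_
  split_ifs <;> simp_all

theorem mul_norm02_add_frobSq_eq_sum_l0ProxCost {m n : ℕ} (lam β : ℝ)
    (H Z : Matrix (Fin m) (Fin n) ℝ) :
    lam * norm02 Z + 1 / (2 * β) * frobSq (Z - H) =
      ∑ s, l0ProxCost lam β (WithLp.toLp 2 (H s)) (WithLp.toLp 2 (Z s)) := by
  have hrow : ∀ s, (Z - H) s = Z s - H s := fun _ => rfl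
  simp only [l0ProxCost, mul_norm02_eq_sum, frobSq_eq_sum_norm_sq, Finset.sum_add_distrib,
    Finset.mul_sum, WithLp.toLp_eq_zero, hrow, WithLp.toLp_sub]

theorem mem_proxSet_norm02_sub_smul_iff {m n : ℕ} {lam β : ℝ} (hlam : 0 < lam) (hβ : 0 < β)
    (W D : Matrix (Fin m) (Fin n) ℝ) :
    W ∈ ProxSet β (fun W => lam * norm02 W) (W - β • D) ↔
      ∀ s, (W s ≠ 0 → D s = 0 ∧ √(2 * β * lam) ≤ rowNorm (W s)) ∧
        (W s = 0 → rowNorm (D s) ≤ √(2 * lam / β)) := by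
  simp only [ProxSet, Set.mem_ofPred_eq, mul_norm02_add_frobSq_eq_sum_l0ProxCost]
  refine (forall_sum_le_sum_iff_forall_le
    (fun s z => l0ProxCost lam β (WithLp.toLp 2 ((W - β • D) s)) (WithLp.toLp 2 z)) W).trans
    (forall_congr' fun s => ?_)
  have hrow : WithLp.toLp 2 ((W - β • D) s) =
      (WithLp.toLp 2 (W s) - β • WithLp.toLp 2 (D s) : EuclideanSpace ℝ (Fin n)) := rfl
  have hcost := forall_l0ProxCost_le_iff hlam hβ (WithLp.toLp 2 (W s)) (WithLp.toLp 2 (D s))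
  rw [(WithLp.toLp_surjective 2).forall, ← hrow] at hcost
  simpa only [rowNorm_eq_norm, ne_eq, WithLp.toLp_eq_zero] using hcost

theorem pStationary_characterization_general
    (p m n : ℕ) (τ γ lam β : ℝ) (hlam : 0 < lam)
    (hβ : 0 < β)
    (U : Matrix (Fin p) (Fin n) ℝ) (V : Matrix (Fin p) (Fin m) ℝ)
    (Wstar : Matrix (Fin m) (Fin n) ℝ) :
    Wstar ∈ ProxSet β (fun W => lam * norm02 W)
        (Wstar - β • gradPsi τ γ U V Wstar) ↔
      ∀ s : Fin m,
        (Wstar s ≠ 0 →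
          gradPsi τ γ U V Wstar s = 0 ∧
            rowNorm (Wstar s) ≥ Real.sqrt (2 * β * lam)) ∧
        (Wstar s = 0 →
          rowNorm (gradPsi τ γ U V Wstar s) ≤ Real.sqrt (2 * lam / β)) :=
  mem_proxSet_norm02_sub_smul_iff hlam hβ Wstar (gradPsi τ γ U V Wstar)

/-- `W*` satisfies `W* ∈ Prox_{βλ‖·‖_{0,2}}(W* − β∇Ψ(W*))` iff for every
row `s`: nonzero rows of `W*` have vanishing gradient row and norm at least `√(2βλ)`,
while zero rows have gradient row norm at most `√(2λ/β)`. -/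
theorem pStationary_characterization
    (p m n : ℕ) (τ γ lam β : ℝ) (hτ : 0 < τ) (hγ : 0 < γ) (hlam : 0 < lam)
    (hβ : 0 < β)
    (U : Matrix (Fin p) (Fin n) ℝ) (V : Matrix (Fin p) (Fin m) ℝ)
    (Wstar : Matrix (Fin m) (Fin n) ℝ) :
    Wstar ∈ ProxSet β (fun W => lam * norm02 W)
        (Wstar - β • gradPsi τ γ U V Wstar) ↔
      ∀ s : Fin m,
        (Wstar s ≠ 0 →
          gradPsi τ γ U V Wstar s = 0 ∧
            rowNorm (Wstar s) ≥ Real.sqrt (2 * β * lam)) ∧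
        (Wstar s = 0 →
          rowNorm (gradPsi τ γ U V Wstar s) ≤ Real.sqrt (2 * lam / β)) :=
  pStationary_characterization_general p m n τ γ lam β hlam hβ U V Wstar
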